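/- arXiv:1707.06137 — 3 statements merged into one kernel-verified Lean document; each statement's English description precedes it below -/
import Mathlib

section
/- Fix q ∈ ℚ and let A_q := ⋃_{z ∈ ℤ} (z − 1/2, z + 1/2) × (q − 1/(1+|z|), q + 1/(1+|z|)) ⊆ ℝ × ℚ (the second factor being an open interval of rationals) and B_q := ℤ × (q − 1, q + 1) ⊆ ℝ × ℚ. Let Φ := φ × id_ℚ : ℝ × ℚ → M × ℚ, where φ : ℝ → M collapses ℤ to a point. Then Φ⁻¹(Φ(A_q)) = A_q ∪ B_q. -/
open Set

/-- The equivalence relation on ℝ identifying all integers with each other. -/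
def intSetoid : Setoid ℝ where
  r x y := x = y ∨ ((∃ m : ℤ, x = (m : ℝ)) ∧ (∃ n : ℤ, y = (n : ℝ)))
  iseqv := by
    refine ⟨fun x => Or.inl rfl, ?_, ?_⟩
    · rintro x y (rfl | ⟨hx, hy⟩)
      · exact Or.inl rfl
      · exact Or.inr ⟨hy, hx⟩
    · rintro x y z (rfl | ⟨hx, hy⟩) (rfl | ⟨hy', hz⟩)
      · exact Or.inl rfl
      · exact Or.inr ⟨hy', hz⟩
      · exact Or.inr ⟨hx, hy⟩
      · exact Or.inr ⟨hx, hz⟩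

/-- The quotient of ℝ collapsing ℤ to a single point, with the quotient topology. -/
def M : Type := Quotient intSetoid

instance : TopologicalSpace M := instTopologicalSpaceQuotient

/-- The canonical projection. -/
def phi : ℝ → M := Quotient.mk intSetoid

/-- `A q = ⋃ z ∈ ℤ, (z - 1/2, z + 1/2) × (q - 1/(1+|z|), q + 1/(1+|z|))`. -/
def A (q : ℚ) : Set (ℝ × ℚ) :=
  ⋃ z : ℤ, (Ioo ((z : ℝ) - 1/2) ((z : ℝ) + 1/2)) ×ˢ
    (Ioo (q - 1/(1 + (|z| : ℚ))) (q + 1/(1 + (|z| : ℚ))))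

/-- `B q = ℤ × (q - 1, q + 1)`. -/
def B (q : ℚ) : Set (ℝ × ℚ) :=
  (Set.range ((↑) : ℤ → ℝ)) ×ˢ Ioo (q - 1) (q + 1)


lemma int_eq_of_mem_Ioo {m z : ℤ} (h : (m:ℝ) ∈ Ioo ((z : ℝ) - 1/2) ((z : ℝ) + 1/2)) :
    m = z := by
  obtain ⟨h1, h2⟩ := h
  have ha : ((-1 : ℤ) : ℝ) < (m - z : ℤ) := by push_cast; linarith
  have hb : ((m - z : ℤ) : ℝ) < (1 : ℤ) := by push_cast; linarith
  have ha' : (-1 : ℤ) < m - z := by exact_mod_cast ha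
  have hb' : m - z < 1 := by exact_mod_cast hb
  omega

/-- `Φ⁻¹(Φ(A_q)) = A_q ∪ B_q`. -/
theorem stmt1 (q : ℚ) :
    (Prod.map phi (id : ℚ → ℚ)) ⁻¹' ((Prod.map phi (id : ℚ → ℚ)) '' A q) = A q ∪ B q := by
  ext ⟨x, r⟩
  simp only [mem_preimage, mem_image, mem_union, Prod.exists]
  constructor
  · rintro ⟨a, b, hab, heq⟩
    obtain ⟨h1, h2⟩ := Prod.ext_iff.mp heq
    simp only [Prod.map_fst, Prod.map_snd, id] at h1 h2
    subst h2
    rcases Quotient.exact h1 with rfl | ⟨⟨m, rfl⟩, ⟨n, rfl⟩⟩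
    · exact Or.inl hab
    · right
      obtain ⟨z, hz1, hz2⟩ := mem_iUnion.mp hab
      have hm : m = z := int_eq_of_mem_Ioo hz1
      subst hm
      refine ⟨⟨n, rfl⟩, ?_, ?_⟩
      · have h1 : (1:ℚ)/(1 + (|m| : ℚ)) ≤ 1 := by
          rw [div_le_one (by positivity)]
          have : (0:ℚ) ≤ (|m| : ℚ) := by exact_mod_cast abs_nonneg m
          linarith
        linarith [hz2.1]
      · have h1 : (1:ℚ)/(1 + (|m| : ℚ)) ≤ 1 := by
          rw [div_le_one (by positivity)]
          have : (0:ℚ) ≤ (|m| : ℚ) := by exact_mod_cast abs_nonneg m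
          linarith
        linarith [hz2.2]
  · rintro (hA | ⟨⟨n, rfl⟩, hr⟩)
    · exact ⟨x, r, hA, rfl⟩
    · refine ⟨(0:ℝ), r, ?_, ?_⟩
      · refine mem_iUnion.mpr ⟨0, ?_, ?_⟩ <;> simp <;> norm_num
        · exact ⟨hr.1, hr.2⟩
      · have : phi 0 = phi n := Quotient.sound (Or.inr ⟨⟨0, by norm_num⟩, ⟨n, rfl⟩⟩)
        simp [Prod.map, this]
end

section
/- Fix q ∈ ℚ and let A_q := ⋃_{z ∈ ℤ} (z − 1/2, z + 1/2) × (q − 1/(1+|z|), q + 1/(1+|z|)) ⊆ ℝ × ℚ. Let Φ := φ × id_ℚ : ℝ × ℚ → M × ℚ, where φ : ℝ → M is the quotient map collapsing ℤ to a point and M × ℚ carries the product topology (M having the quotient topology). Then Φ(A_q) is NOT a neighborhood of the point (φ(0), q) in M × ℚ. -/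
open Set

/-- `Φ(A_q)` is not a neighborhood of `(φ 0, q)` in `M × ℚ`. -/
theorem stmt2 (q : ℚ) :
    (Prod.map phi (id : ℚ → ℚ)) '' A q ∉ nhds (phi 0, q) := by
  intro h
  rw [mem_nhds_prod_iff] at h
  obtain ⟨U, hU, V, hV, hUV⟩ := h
  obtain ⟨W, hWU, hWopen, hW0⟩ := mem_nhds_iff.mp hU
  have hWpre : IsOpen (phi ⁻¹' W) := hWopen.preimage continuous_quotient_mk'
  obtain ⟨ε, hε, hball⟩ := Metric.mem_nhds_iff.mp hV
  obtain ⟨N, hN⟩ := exists_nat_one_div_lt hε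
  -- the rational point
  set r : ℚ := q + 1/(1 + (N:ℚ)) with hr
  have hrq : (0:ℚ) < 1/(1 + (N:ℚ)) := by positivity
  have hrV : r ∈ V := by
    apply hball
    simp only [Metric.mem_ball, Rat.dist_eq, hr]
    push_cast
    have heq : (q:ℝ) + 1/(1+(N:ℝ)) - q = 1/((N:ℝ)+1) := by ring
    rw [heq, abs_of_pos (by positivity)]
    exact hN
  -- phi N ∈ W
  have hphiN : phi (N:ℝ) = phi 0 := by
    apply Quotient.sound
    exact Or.inr ⟨⟨(N:ℤ), by push_cast; ring⟩, ⟨0, by norm_num⟩⟩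
  have hNW : (N:ℝ) ∈ phi ⁻¹' W := by
    simp only [mem_preimage, hphiN]; exact hW0
  obtain ⟨δ, hδ, hballδ⟩ := Metric.isOpen_iff.mp hWpre _ hNW
  set t : ℝ := min δ (1/2) / 2 with ht
  have ht0 : 0 < t := by positivity
  have htδ : t < δ := by
    have := min_le_left δ (1/2 : ℝ)
    simp only [ht]; linarith
  have ht2 : t < 1/2 := by
    have := min_le_right δ (1/2 : ℝ)
    simp only [ht]; linarith
  set x : ℝ := (N:ℝ) + t with hx
  have hxW : x ∈ phi ⁻¹' W := by
    apply hballδ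
    simp only [Metric.mem_ball, Real.dist_eq, hx]
    rw [abs_of_pos (by linarith)]
    linarith
  have hmem : (phi x, r) ∈ (Prod.map phi (id : ℚ → ℚ)) '' A q :=
    hUV ⟨hWU hxW, hrV⟩
  obtain ⟨⟨x', r'⟩, hA, heq⟩ := hmem
  simp only [Prod.map, Prod.mk.injEq, id] at heq
  obtain ⟨hphix, hrr⟩ := heq
  -- x is not an integer
  have hxnotint : ¬ ∃ m : ℤ, x = (m : ℝ) := by
    rintro ⟨m, hm⟩
    have h1 : (N:ℝ) < m := by rw [← hm, hx]; linarith
    have h2 : (m:ℝ) < (N:ℝ) + 1 := by rw [← hm, hx]; linarith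
    have h1' : (N:ℤ) < m := by exact_mod_cast h1
    have h2' : m < (N:ℤ) + 1 := by exact_mod_cast h2
    omega
  have hx'x : x' = x := by
    have := Quotient.exact hphix
    rcases this with heq' | ⟨_, hxint⟩
    · exact heq'
    · exact absurd hxint hxnotint
  subst hx'x
  subst hrr
  -- extract the index z from membership in A
  simp only [A, mem_iUnion, mem_prod, mem_Ioo] at hA
  obtain ⟨z, ⟨hz1, hz2⟩, hr1, hr2⟩ := hA
  -- z = N
  have hzN : z = (N:ℤ) := by
    have h1 : (z:ℝ) - 1/2 < (N:ℝ) + t := by rw [hx] at hz1; linarith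
    have h2 : (N:ℝ) + t < (z:ℝ) + 1/2 := by rw [hx] at hz2; linarith
    have h3 : (z:ℝ) < (N:ℝ) + 1 := by linarith
    have h4 : (N:ℝ) < (z:ℝ) + 1/2 := by linarith
    have h3' : z < (N:ℤ) + 1 := by exact_mod_cast h3
    have h4' : 2*(N:ℤ) < 2*z + 1 := by
      have : 2*(N:ℝ) < 2*(z:ℝ) + 1 := by linarith
      exact_mod_cast this
    omega
  subst hzN
  have habs : |((N:ℤ):ℚ)| = (N:ℚ) := by
    rw [abs_of_nonneg (by positivity)]; push_cast; rfl
  rw [habs, ← hr] at hr2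
  exact lt_irrefl _ hr2
end

section
/- Fix q ∈ ℚ and let A_q := ⋃_{z ∈ ℤ} (z − 1/2, z + 1/2) × (q − 1/(1+|z|), q + 1/(1+|z|)) ⊆ ℝ × ℚ. Let Φ := φ × id_ℚ : ℝ × ℚ → M × ℚ, where φ : ℝ → M is the quotient map collapsing ℤ to a point. Then for every open set U ⊆ M with φ(0) ∈ U and every open set V ⊆ ℚ with q ∈ V, the product U × V is NOT contained in Φ(A_q). -/
open Set

/-- No open box `U × V` around `(φ 0, q)` is contained in `Φ(A_q)`. -/
theorem stmt3 (q : ℚ) :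
    ∀ U : Set M, IsOpen U → phi 0 ∈ U → ∀ V : Set ℚ, IsOpen V → q ∈ V →
      ¬ (U ×ˢ V ⊆ (Prod.map phi (id : ℚ → ℚ)) '' A q) := by
  intro U hU hU0 V hV hqV hsub
  -- choose small rational ε with q + ε ∈ V
  obtain ⟨r, hr, hball⟩ := Metric.isOpen_iff.mp hV q hqV
  obtain ⟨ε, hε0, hεr⟩ := exists_rat_btwn hr
  set y : ℚ := q + ε with hy
  have hε0' : (0:ℚ) < ε := by exact_mod_cast hε0
  have hyV : y ∈ V := by
    apply hball
    simp only [Metric.mem_ball, Rat.dist_eq, hy]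
    push_cast
    rw [show (q:ℝ) + ε - q = (ε:ℝ) by ring, abs_of_pos hε0]
    exact hεr
  -- choose large integer Z
  set Z : ℤ := max 1 ⌈ε⁻¹⌉ with hZ
  have hZ1 : 1 ≤ Z := le_max_left _ _
  have hZinv : ε⁻¹ < 1 + (Z:ℚ) := by
    have h1 : (ε⁻¹ : ℚ) ≤ (⌈ε⁻¹⌉ : ℚ) := Int.le_ceil _
    have h2 : (⌈ε⁻¹⌉ : ℚ) ≤ (Z:ℚ) := by exact_mod_cast le_max_right 1 ⌈ε⁻¹⌉
    linarith
  have hZpos : (0:ℚ) < 1 + (Z:ℚ) := by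
    have : (1:ℚ) ≤ (Z:ℚ) := by exact_mod_cast hZ1
    linarith
  have hkey : 1/(1 + (Z:ℚ)) < ε := by
    rw [div_lt_iff₀ hZpos]
    calc (1:ℚ) = ε * ε⁻¹ := (mul_inv_cancel₀ (ne_of_gt hε0')).symm
    _ < ε * (1 + Z) := by exact mul_lt_mul_of_pos_left hZinv hε0'
  -- φ⁻¹ U is open and contains Z
  have hUopen : IsOpen (phi ⁻¹' U) := hU.preimage continuous_quotient_mk'
  have hphiZ : phi (Z:ℝ) = phi 0 :=
    Quotient.sound (Or.inr ⟨⟨Z, rfl⟩, ⟨0, by norm_num⟩⟩)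
  have hZU : (Z:ℝ) ∈ phi ⁻¹' U := by
    simp only [mem_preimage, hphiZ]; exact hU0
  obtain ⟨δ, hδ0, hδball⟩ := Metric.isOpen_iff.mp hUopen _ hZU
  set t : ℝ := min δ (1/2) / 2 with ht
  have ht0 : 0 < t := by positivity
  have htδ : t < δ := by
    have : min δ (1/2) ≤ δ := min_le_left _ _
    have h2 : t < min δ (1/2) := by
      rw [ht]; linarith [lt_min hδ0 (by norm_num : (0:ℝ) < 1/2)]
    linarith
  have ht2 : t < 1/2 := by
    have : min δ (1/2) ≤ 1/2 := min_le_right _ _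
    rw [ht]; linarith
  set x : ℝ := (Z:ℝ) + t with hx
  have hxU : x ∈ phi ⁻¹' U := by
    apply hδball
    simp only [Metric.mem_ball, Real.dist_eq, hx]
    rw [show (Z:ℝ) + t - Z = t by ring, abs_of_pos ht0]
    exact htδ
  have hxlo : (Z:ℝ) < x := by rw [hx]; linarith
  have hxhi : x < (Z:ℝ) + 1/2 := by rw [hx]; linarith
  have hxnotint : ¬ ∃ m : ℤ, x = (m : ℝ) := by
    rintro ⟨m, hm⟩
    rw [hm] at hxlo hxhi
    have h1 : Z < m := by exact_mod_cast hxlo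
    have h2 : (m:ℝ) < (Z:ℝ) + 1 := by linarith
    have h3 : m < Z + 1 := by exact_mod_cast h2
    omega
  -- get the contradiction
  obtain ⟨⟨a, b⟩, hab, heq⟩ := hsub (show (phi x, y) ∈ U ×ˢ V from ⟨hxU, hyV⟩)
  simp only [Prod.map, Prod.mk.injEq, id_eq] at heq
  obtain ⟨heqa, heqb⟩ := heq
  have ha : a = x := by
    rcases Quotient.exact heqa with h | ⟨_, hxint⟩
    · exact h
    · exact absurd hxint hxnotint
  subst ha; subst heqb
  rw [A, mem_iUnion] at hab
  obtain ⟨z, hz⟩ := hab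
  obtain ⟨⟨hz1, hz2⟩, hb1, hb2⟩ := hz
  -- z = Z
  have hzZ : z = Z := by
    have h1 : (z:ℝ) < (Z:ℝ) + 1 := by linarith
    have h2 : (Z:ℝ) < (z:ℝ) + 1 := by linarith
    have h1' : z < Z + 1 := by exact_mod_cast h1
    have h2' : Z < z + 1 := by exact_mod_cast h2
    omega
  have hzpos : 0 < z := by
    rw [hzZ]; exact lt_of_lt_of_le Int.zero_lt_one hZ1
  have habs : |(z:ℚ)| = (z:ℚ) := abs_of_pos (by exact_mod_cast hzpos)
  rw [habs, hzZ] at hb2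
  have : ε < 1/(1 + (Z:ℚ)) := by linarith
  linarith
end
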